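/- Let Γ and Λ be countable discrete groups that are measure equivalent via (Ω, m, X, Y). If φ : Λ → ℂ is finitely supported, then the induced function φ̂ : Γ → ℂ, φ̂(γ) = (1/m(Y)) Σ_{s∈Λ} φ(s) m(γ(sY) ∩ Y), is a coefficient of a multiple of the left regular representation of Γ: there exist a complex Hilbert space H and ξ, η ∈ ℓ²(Γ; H) such that φ̂(γ) = Σ_{t∈Γ} ⟨ξ(γ⁻¹t), η(t)⟩ for all γ ∈ Γ. -/

import Mathlib

open MeasureTheory Filter
open scoped Pointwise ENNReal

/-- The function `φ̂(γ) = (1/m(Y)) Σ_{s∈Λ} φ(s) m(γ(sY) ∩ Y)` induced from `φ : Λ → ℂ`. -/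
noncomputable def inducedMultiplier {Ω : Type*} [MeasurableSpace Ω] (m : Measure Ω)
    {Γ Λ : Type*} [Group Γ] [Group Λ] [MulAction Γ Ω] [MulAction Λ Ω]
    (Y : Set Ω) (φ : Λ → ℂ) (γ : Γ) : ℂ :=
  ((m Y).toReal)⁻¹ * ∑' s : Λ, φ s * ((m ((γ • (s • Y)) ∩ Y)).toReal : ℂ)

/-- Auxiliary (Type-0 index version): a countable family of vectors in an arbitrary complex
inner product space can be realized, with the same Gram matrix, in a complex inner product
space living in universe 0. -/
theorem descend_hilbert_aux {E : Type*} [NormedAddCommGroup E] [InnerProductSpace ℂ E]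
    {ι : Type} (V : ι → E) :
    ∃ (H : Type) (_ : NormedAddCommGroup H) (_ : InnerProductSpace ℂ H) (W : ι → H),
      (∀ i, ‖W i‖ = ‖V i‖) ∧ ∀ i j, (inner ℂ (W i) (W j) : ℂ) = inner ℂ (V i) (V j) := by
  classical
  set T : (ι →₀ ℂ) →ₗ[ℂ] E := Finsupp.linearCombination ℂ V with hT
  set K : Submodule ℂ (ι →₀ ℂ) := LinearMap.ker T with hK
  set T' : ((ι →₀ ℂ) ⧸ K) →ₗ[ℂ] E := K.liftQ T le_rfl with hT'
  have hinj : Function.Injective T' := by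
    rw [← LinearMap.ker_eq_bot]
    exact Submodule.ker_liftQ_eq_bot _ _ _ le_rfl
  have hmk : ∀ x : ι →₀ ℂ, T' (Submodule.Quotient.mk x) = T x := fun x => rfl
  let core : InnerProductSpace.Core ℂ ((ι →₀ ℂ) ⧸ K) :=
  { inner := fun x y => inner ℂ (T' x) (T' y)
    conj_inner_symm := fun x y => inner_conj_symm _ _
    re_inner_nonneg := fun x => inner_self_nonneg
    add_left := fun x y z => by simp only [map_add, inner_add_left]
    smul_left := fun x y r => by simp only [_root_.map_smul, inner_smul_left]
    definite := fun x hx => by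
      have : T' x = 0 := inner_self_eq_zero.mp hx
      exact hinj (by simpa using this) }
  letI : NormedAddCommGroup ((ι →₀ ℂ) ⧸ K) := core.toNormedAddCommGroup
  letI : InnerProductSpace ℂ ((ι →₀ ℂ) ⧸ K) := InnerProductSpace.ofCore core.toCore
  set W : ι → ((ι →₀ ℂ) ⧸ K) := fun i => Submodule.Quotient.mk (Finsupp.single i 1) with hW
  have hTW : ∀ i, T' (W i) = V i := by
    intro i
    rw [hW, hmk, hT]
    simp [Finsupp.linearCombination_single]
  have hinner : ∀ i j, (inner ℂ (W i) (W j) : ℂ) = inner ℂ (V i) (V j) := by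
    intro i j
    have : (inner ℂ (W i) (W j) : ℂ) = inner ℂ (T' (W i)) (T' (W j)) := rfl
    rw [this, hTW, hTW]
  refine ⟨_, _, _, W, fun i => ?_, hinner⟩
  rw [@norm_eq_sqrt_re_inner ℂ, @norm_eq_sqrt_re_inner ℂ _ _ _ _ (V i), hinner]

/-- A countable family of vectors in an arbitrary complex inner product space can be realized,
with the same Gram matrix, in a complex inner product space living in universe 0. -/
theorem descend_hilbert {E : Type*} [NormedAddCommGroup E] [InnerProductSpace ℂ E]
    {ι : Type*} [Countable ι] (V : ι → E) :
    ∃ (H : Type) (_ : NormedAddCommGroup H) (_ : InnerProductSpace ℂ H) (W : ι → H),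
      (∀ i, ‖W i‖ = ‖V i‖) ∧ ∀ i j, (inner ℂ (W i) (W j) : ℂ) = inner ℂ (V i) (V j) := by
  obtain ⟨enc, henc⟩ := Countable.exists_injective_nat ι
  set e : ι ≃ Set.range enc := Equiv.ofInjective enc henc with he
  obtain ⟨H, i1, i2, W₀, hn, hi⟩ := descend_hilbert_aux (V ∘ e.symm)
  refine ⟨H, i1, i2, fun i => W₀ (e i), fun i => ?_, fun i j => ?_⟩
  · simpa using hn (e i)
  · simpa using hi (e i) (e j)

/-- The square of the `L²`-norm as a lower Lebesgue integral. -/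
theorem sq_norm_toLp_eq {α : Type*} [MeasurableSpace α] {μ : Measure α} {f : α → ℂ}
    (hm : MemLp f 2 μ) :
    ‖hm.toLp f‖ ^ 2 = (∫⁻ x, (‖f x‖₊ : ℝ≥0∞) ^ (2 : ℝ) ∂μ).toReal := by
  rw [Lp.norm_toLp, eLpNorm_eq_lintegral_rpow_enorm_toReal two_ne_zero ENNReal.ofNat_ne_top]
  have h2 : ((2 : ℝ≥0∞)).toReal = (2 : ℝ) := by norm_num
  rw [h2, ← ENNReal.toReal_rpow, ← Real.rpow_natCast _ 2, ← Real.rpow_mul ENNReal.toReal_nonneg]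
  norm_num
  rfl

theorem inducedMultiplier_coefficient_of_multiple_of_leftRegular
    {Ω : Type*} [MeasurableSpace Ω] (m : Measure Ω) [SigmaFinite m]
    {Γ Λ : Type*} [Group Γ] [Countable Γ] [Group Λ] [Countable Λ]
    [MulAction Γ Ω] [MulAction Λ Ω]
    (hΓ : ∀ γ : Γ, MeasurePreserving (fun ω => γ • ω) m m)
    (hΛ : ∀ s : Λ, MeasurePreserving (fun ω => s • ω) m m)
    (hcomm : ∀ (γ : Γ) (s : Λ) (ω : Ω), γ • s • ω = s • γ • ω)
    -- `X` is a finite-measure fundamental domain for the `Γ`-action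
    (X : Set Ω) (hX : IsFundamentalDomain Γ X m) (hXpos : 0 < m X) (hXfin : m X < ⊤)
    -- `Y` is a finite-measure fundamental domain for the `Λ`-action
    (Y : Set Ω) (hY : IsFundamentalDomain Λ Y m) (hYpos : 0 < m Y) (hYfin : m Y < ⊤)
    (φ : Λ → ℂ) (hφ : (Function.support φ).Finite) :
    -- `φ̂` is a coefficient of a multiple of the left regular representation of `Γ`:
    ∃ (H : Type) (_ : NormedAddCommGroup H) (_ : InnerProductSpace ℂ H) (ξ η : Γ → H),
      (Summable fun t : Γ => ‖ξ t‖ ^ 2) ∧ (Summable fun t : Γ => ‖η t‖ ^ 2) ∧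
      ∀ γ : Γ, inducedMultiplier m Y φ γ = ∑' t : Γ, (inner ℂ (η t) (ξ (γ⁻¹ * t)) : ℂ) := by
  classical
  letI : MeasurableSpace Γ := ⊤
  haveI : MeasurableSMul Γ Ω := { measurable_const_smul := fun c => (hΓ c).measurable, measurable_smul_const := fun _ => measurable_from_top }
  haveI : SMulInvariantMeasure Γ Ω m :=
    ⟨fun c s hs => (hΓ c).measure_preimage hs.nullMeasurableSet⟩
  -- a measurable model for `Y`
  set Ym : Set Ω := toMeasurable m Y with hYm_def
  have hYm : MeasurableSet Ym := measurableSet_toMeasurable m Y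
  have hae : Ym =ᵐ[m] Y := NullMeasurableSet.toMeasurable_ae_eq hY.nullMeasurableSet
  have hmYm : m Ym = m Y := measure_congr hae
  -- translates of sets as preimages
  have hpreΛ : ∀ (s : Λ) (A : Set Ω), s • A = (fun ω => s⁻¹ • ω) ⁻¹' A := by
    intro s A; ext ω
    rw [Set.mem_preimage, Set.mem_smul_set_iff_inv_smul_mem]
  have hpre : ∀ (γ : Γ) (s : Λ) (A : Set Ω),
      γ • s • A = (fun ω => s⁻¹ • γ⁻¹ • ω) ⁻¹' A := by
    intro γ s A; ext ω
    rw [Set.mem_preimage, Set.mem_smul_set_iff_inv_smul_mem, Set.mem_smul_set_iff_inv_smul_mem]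
  have hqmp : ∀ (γ : Γ) (s : Λ), MeasurePreserving (fun ω => s⁻¹ • γ⁻¹ • ω) m m :=
    fun γ s => (hΛ s⁻¹).comp (hΓ γ⁻¹)
  have hsmul_meas : ∀ s : Λ, MeasurableSet (s • Ym) := fun s => by
    rw [hpreΛ]; exact (hΛ s⁻¹).measurable hYm
  have hsmul_m : ∀ s : Λ, m (s • Ym) = m Y := fun s => by
    rw [hpreΛ, (hΛ s⁻¹).measure_preimage hYm.nullMeasurableSet]; exact hmYm
  have hγsYm_meas : ∀ (γ : Γ) (s : Λ), MeasurableSet (γ • s • Ym) := fun γ s => by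
    rw [hpre]; exact (hqmp γ s).measurable hYm
  have hγs_ae : ∀ (γ : Γ) (s : Λ), (γ • s • Ym : Set Ω) =ᵐ[m] (γ • s • Y : Set Ω) := fun γ s => by
    rw [hpre, hpre]
    exact (hqmp γ s).quasiMeasurePreserving.preimage_ae_eq hae
  have hm_inter : ∀ (γ : Γ) (s : Λ), m (Ym ∩ γ • s • Ym) = m (γ • s • Y ∩ Y) := fun γ s => by
    rw [Set.inter_comm]
    exact measure_congr (ae_eq_set_inter (hγs_ae γ s) hae)
  -- the two functions on `Ω`
  set F : Finset Λ := hφ.toFinset with hF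
  set c : ℝ := ((m Y).toReal)⁻¹ with hc
  set f : Ω → ℂ := fun ω => ∑ s ∈ F, Set.indicator (s • Ym) (fun _ => φ s) ω with hf_def
  set g : Ω → ℂ := Set.indicator Ym (fun _ => (c : ℂ)) with hg_def
  have hf_mem : MemLp f 2 m := by
    apply memLp_finset_sum
    intro s _
    exact memLp_indicator_const 2 (hsmul_meas s) _ (Or.inr (by rw [hsmul_m]; exact hYfin.ne))
  have hg_mem : MemLp g 2 m :=
    memLp_indicator_const 2 hYm _ (Or.inr (by rw [hmYm]; exact hYfin.ne))
  -- the `ℓ²(Γ, L²(X))`-vectors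
  set μX : Measure Ω := m.restrict X with hμX
  have hfc : ∀ t : Γ, MemLp (fun x => f (t • x)) 2 μX := fun t =>
    (hf_mem.comp_measurePreserving (hΓ t)).restrict X
  have hgc : ∀ t : Γ, MemLp (fun x => g (t • x)) 2 μX := fun t =>
    (hg_mem.comp_measurePreserving (hΓ t)).restrict X
  set ξ₀ : Γ → Lp ℂ 2 μX := fun t => (hfc t).toLp _ with hξ₀
  set η₀ : Γ → Lp ℂ 2 μX := fun t => (hgc t).toLp _ with hη₀
  -- summability
  have hsum_gen : ∀ (u : Ω → ℂ) (hu : MemLp u 2 m)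
      (hc' : ∀ t : Γ, MemLp (fun x => u (t • x)) 2 μX),
      Summable fun t : Γ => ‖(hc' t).toLp _‖ ^ 2 := by
    intro u hu hc'
    have key : (∑' t : Γ, ∫⁻ x, (‖u (t • x)‖₊ : ℝ≥0∞) ^ (2 : ℝ) ∂μX) ≠ ⊤ := by
      rw [hμX, ← hX.lintegral_eq_tsum'' (fun ω => (‖u ω‖₊ : ℝ≥0∞) ^ (2 : ℝ))]
      have h2 := hu.2
      rw [eLpNorm_eq_lintegral_rpow_enorm_toReal two_ne_zero ENNReal.ofNat_ne_top] at h2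
      have h2' : ((2 : ℝ≥0∞)).toReal = (2 : ℝ) := by norm_num
      rw [h2'] at h2
      rw [ENNReal.rpow_lt_top_iff_of_pos (by norm_num : (0:ℝ) < 1/2)] at h2
      exact h2.ne
    have := ENNReal.summable_toReal key
    exact this.congr fun t => (sq_norm_toLp_eq (hc' t)).symm
  have hsum_f : Summable fun t : Γ => ‖ξ₀ t‖ ^ 2 := hsum_gen f hf_mem hfc
  have hsum_g : Summable fun t : Γ => ‖η₀ t‖ ^ 2 := hsum_gen g hg_mem hgc
  -- the main identity
  have key : ∀ γ : Γ,
      inducedMultiplier m Y φ γ = ∑' t : Γ, (inner ℂ (η₀ t) (ξ₀ (γ⁻¹ * t)) : ℂ) := by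
    intro γ
    set h : Ω → ℂ := fun ω => (starRingEnd ℂ) (g ω) * f (γ⁻¹ • ω) with hh
    have hrepr : h = fun ω =>
        ∑ s ∈ F, Set.indicator (Ym ∩ γ • s • Ym) (fun _ => (c : ℂ) * φ s) ω := by
      funext ω
      have hconj : (starRingEnd ℂ) (g ω) = g ω := by
        rw [hg_def]
        by_cases hω : ω ∈ Ym <;>
          simp [Set.indicator_of_mem, Set.indicator_of_notMem, hω, Complex.conj_ofReal]
      calc h ω = g ω * ∑ s ∈ F, (s • Ym).indicator (fun _ => φ s) (γ⁻¹ • ω) := by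
            rw [show h ω = (starRingEnd ℂ) (g ω) * f (γ⁻¹ • ω) from rfl, hconj]
        _ = ∑ s ∈ F, g ω * (s • Ym).indicator (fun _ => φ s) (γ⁻¹ • ω) := Finset.mul_sum ..
        _ = ∑ s ∈ F, (Ym ∩ γ • s • Ym).indicator (fun _ => (c : ℂ) * φ s) ω := ?_
      apply Finset.sum_congr rfl
      intro s _
      have e2 : Set.indicator (s • Ym) (fun _ => φ s) (γ⁻¹ • ω)
          = Set.indicator (γ • s • Ym) (fun _ => φ s) ω := by
        by_cases h2 : ω ∈ γ • s • Ym
        · rw [Set.indicator_of_mem h2,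
            Set.indicator_of_mem (Set.mem_smul_set_iff_inv_smul_mem.mp h2)]
        · rw [Set.indicator_of_notMem h2,
            Set.indicator_of_notMem (fun hx => h2 (Set.mem_smul_set_iff_inv_smul_mem.mpr hx))]
      rw [e2]
      exact (Set.inter_indicator_mul (fun _ => (c : ℂ)) (fun _ => φ s) ω).symm
    have hint_each : ∀ s ∈ F, Integrable
        (fun ω => Set.indicator (Ym ∩ γ • s • Ym) (fun _ => (c : ℂ) * φ s) ω) m := by
      intro s _
      rw [integrable_indicator_iff (hYm.inter (hγsYm_meas γ s))]
      refine (integrableOn_const_iff enorm_ne_top).mpr (Or.inr ?_)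
      exact (measure_mono Set.inter_subset_left).trans_lt (hmYm ▸ hYfin)
    have hint : Integrable h m := by
      rw [hrepr]
      exact integrable_finset_sum F hint_each
    have hIntegral : ∫ ω, h ω ∂m = ∑ s ∈ F, (c : ℂ) * φ s * ((m (γ • s • Y ∩ Y)).toReal : ℂ) := by
      rw [hrepr, integral_finset_sum F hint_each]
      apply Finset.sum_congr rfl
      intro s _
      rw [integral_indicator_const _ (hYm.inter (hγsYm_meas γ s)), measureReal_def, hm_inter γ s,
        Complex.real_smul]
      ring
    have hterm : ∀ t : Γ, (inner ℂ (η₀ t) (ξ₀ (γ⁻¹ * t)) : ℂ) = ∫ x, h (t • x) ∂μX := by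
      intro t
      rw [hη₀, hξ₀, MeasureTheory.L2.inner_def]
      refine integral_congr_ae ?_
      filter_upwards [MemLp.coeFn_toLp (hgc t), MemLp.coeFn_toLp (hfc (γ⁻¹ * t))] with x e1 e2
      rw [e1, e2, RCLike.inner_apply, hh, mul_smul]
      exact mul_comm _ _
    calc inducedMultiplier m Y φ γ
        = ∑ s ∈ F, (c : ℂ) * φ s * ((m (γ • s • Y ∩ Y)).toReal : ℂ) := by
          rw [inducedMultiplier]
          rw [tsum_eq_sum (s := F) (f := fun s : Λ => φ s * ((m ((γ • (s • Y)) ∩ Y)).toReal : ℂ))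
            (fun s hs => by
              have hzero : φ s = 0 := by
                by_contra hne
                exact hs (hφ.mem_toFinset.mpr hne)
              simp [hzero])]
          rw [Finset.mul_sum]
          apply Finset.sum_congr rfl
          intro s _
          rw [hc]
          push_cast
          ring
      _ = ∫ ω, h ω ∂m := hIntegral.symm
      _ = ∑' t : Γ, ∫ x in X, h (t • x) ∂m := hX.integral_eq_tsum'' h hint
      _ = ∑' t : Γ, (inner ℂ (η₀ t) (ξ₀ (γ⁻¹ * t)) : ℂ) := by
          exact tsum_congr fun t => (hterm t).symm
  -- descend to a universe-0 Hilbert space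
  obtain ⟨H, i1, i2, W, hWnorm, hWinner⟩ :=
    descend_hilbert (fun i : Γ ⊕ Γ => Sum.elim ξ₀ η₀ i)
  refine ⟨H, i1, i2, fun t => W (Sum.inl t), fun t => W (Sum.inr t), ?_, ?_, ?_⟩
  · exact hsum_f.congr fun t => congrArg (· ^ 2) (hWnorm (Sum.inl t)).symm
  · exact hsum_g.congr fun t => congrArg (· ^ 2) (hWnorm (Sum.inr t)).symm
  · intro γ
    rw [key γ]
    exact tsum_congr fun t => (hWinner (Sum.inr t) (Sum.inl (γ⁻¹ * t))).symm
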